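/- arXiv:1303.3853 — 7 statements merged into one kernel-verified Lean document; each statement's English description precedes it below -/
import Mathlib

section
/- Let F : ℝⁿ → ℝⁿ be a polynomial map with F(0) = 0. Then there is a unique polynomial map G₁ : ℝⁿ × ℝ → ℝⁿ satisfying t • G₁(x,t) = F(t • x) for all (x,t) ∈ ℝⁿ × ℝ, and the Segre extension G(x,t) = (G₁(x,t), t) satisfies j(G)(x,t) = j(F)(t • x) for all (x,t) ∈ ℝⁿ × ℝ. In particular, G is nonsingular if and only if F is nonsingular, and j(G) is a nonzero constant if and only if j(F) is a nonzero constant. -/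
noncomputable section

/-- A map between real coordinate spaces is a polynomial map if each component is
given by evaluation of a real polynomial. -/
def IsPolynomialMap {ι κ : Type*} (F : (ι → ℝ) → (κ → ℝ)) : Prop :=
  ∃ p : κ → MvPolynomial ι ℝ, ∀ x i, F x i = MvPolynomial.eval x (p i)

/-- The Jacobian determinant j(F)(p) = det J(F)(p) of a map at a point. -/
def jdet {E : Type*} [NormedAddCommGroup E] [NormedSpace ℝ E] (F : E → E) (p : E) : ℝ :=
  LinearMap.det (fderiv ℝ F p : E →ₗ[ℝ] E)

/-!
Off the hyperplane `t = 0` we have `G₁(x,t) = F(t x) / t`, so the `x`-block of `J(G)(x,t)` is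
`J(F)(t x)`, while the last row of `J(G)` is `(0, …, 0, 1)`; hence `j(G)(x,t) = j(F)(t x)` there,
and everywhere by continuity. `G₁` exists because `F(0) = 0` makes every monomial of `F(t x)`
divisible by `t`, and it is unique by continuity as well. The two equivalences follow since
`(x,t) ↦ t x` is onto.
-/

open MvPolynomial Topology

theorem Matrix.det_eq_det_submatrix_castSucc_of_row_last {R : Type*} [CommRing R] {n : ℕ}
    (M : Matrix (Fin (n + 1)) (Fin (n + 1)) R) (h : M (Fin.last n) = Pi.single (Fin.last n) 1) :
    M.det = (M.submatrix Fin.castSucc Fin.castSucc).det := by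
  rw [Matrix.det_succ_row M (Fin.last n), Finset.sum_eq_single (Fin.last n)]
  · simp [h, ← two_mul, pow_mul]
  · intro j _ hj
    simp [h, hj]
  · simp

theorem dense_setOf_apply_ne {ι X : Type*} [TopologicalSpace X] (i : ι) (x : X)
    [(𝓝[≠] x).NeBot] : Dense {v : ι → X | v i ≠ x} :=
  (dense_compl_singleton x).preimage (isOpenMap_eval i)

theorem MvPolynomial.dvd_bind₁_of_constantCoeff_eq_zero {σ τ R : Type*} [CommSemiring R]
    {p : MvPolynomial σ R} (hp : constantCoeff p = 0) {f : σ → MvPolynomial τ R}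
    {a : MvPolynomial τ R} (hf : ∀ i, a ∣ f i) : a ∣ bind₁ f p := by
  have hmem : p ∈ idealOfVars σ R := by
    rw [← pow_one (idealOfVars σ R), mem_pow_idealOfVars_iff']
    intro m hm
    rwa [(Finsupp.degree_eq_zero_iff _).1 (Nat.lt_one_iff.1 hm), ← constantCoeff_eq]
  have hspan := Ideal.mem_map_of_mem (bind₁ f) hmem
  rw [idealOfVars, Ideal.map_span, ← Set.range_comp] at hspan
  refine Ideal.mem_span_singleton.1 (Ideal.span_le.2 ?_ hspan)
  rintro _ ⟨i, rfl⟩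
  simpa [Ideal.mem_span_singleton] using hf i

theorem IsPolynomialMap.continuous {ι κ : Type*} {F : (ι → ℝ) → (κ → ℝ)}
    (hF : IsPolynomialMap F) : Continuous F := by
  obtain ⟨p, hp⟩ := hF
  exact continuous_pi fun i => by simpa only [hp] using continuous_eval (p i)

theorem IsPolynomialMap.contDiff {ι κ : Type*} [Fintype ι] [Fintype κ]
    {F : (ι → ℝ) → (κ → ℝ)} (hF : IsPolynomialMap F) {k : WithTop ℕ∞} : ContDiff ℝ k F := by
  obtain ⟨p, hp⟩ := hF
  exact contDiff_pi.2 fun i => by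
    simpa only [hp] using (AnalyticOnNhd.eval_mvPolynomial (p i)).contDiff

theorem ContDiff.continuous_jdet {E : Type*} [NormedAddCommGroup E] [NormedSpace ℝ E]
    [FiniteDimensional ℝ E] {H : E → E} (hH : ContDiff ℝ 1 H) : Continuous (jdet H) :=
  ContinuousLinearMap.continuous_det.comp (hH.continuous_fderiv one_ne_zero)

section snocLast

variable {n : ℕ}

open ContinuousLinearMap

def snocLast (H : (Fin (n + 1) → ℝ) → (Fin n → ℝ)) : (Fin (n + 1) → ℝ) → (Fin (n + 1) → ℝ) :=
  fun w => Fin.snoc (H w) (w (Fin.last n))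

theorem hasFDerivAt_snocLast {H : (Fin (n + 1) → ℝ) → (Fin n → ℝ)}
    {H' : (Fin (n + 1) → ℝ) →L[ℝ] (Fin n → ℝ)} {v : Fin (n + 1) → ℝ} (hH : HasFDerivAt H H' v) :
    HasFDerivAt (snocLast H) (pi (Fin.snoc (fun i => proj i ∘L H') (proj (Fin.last n)))) v := by
  refine hasFDerivAt_pi.2 fun k => ?_
  induction k using Fin.lastCases with
  | last => simpa [snocLast] using hasFDerivAt_apply (Fin.last n) v
  | cast i => simpa [snocLast] using hasFDerivAt_pi'.1 hH i

theorem contDiff_snocLast {H : (Fin (n + 1) → ℝ) → (Fin n → ℝ)} {k : WithTop ℕ∞}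
    (hH : ContDiff ℝ k H) : ContDiff ℝ k (snocLast H) := by
  refine contDiff_pi.2 fun j => ?_
  induction j using Fin.lastCases with
  | last => simpa [snocLast] using contDiff_apply ℝ ℝ (Fin.last n)
  | cast i => simpa [snocLast] using contDiff_pi.1 hH i

theorem jdet_snocLast {H : (Fin (n + 1) → ℝ) → (Fin n → ℝ)} {v : Fin (n + 1) → ℝ}
    (hH : DifferentiableAt ℝ H v) :
    jdet (snocLast H) v =
      (Matrix.of fun i j => fderiv ℝ H v (Pi.single (Fin.castSucc j) 1) i).det := by
  rw [jdet, (hasFDerivAt_snocLast hH.hasFDerivAt).fderiv, ← LinearMap.det_toMatrix',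
    Matrix.det_eq_det_submatrix_castSucc_of_row_last]
  · congr 1
    ext i j
    simp [LinearMap.toMatrix'_apply]
  · ext j
    simp [LinearMap.toMatrix'_apply, Pi.single_apply, eq_comm]

end snocLast

section Segre

variable {n : ℕ}

def IsSegreLift (F : (Fin n → ℝ) → (Fin n → ℝ)) (G₁ : (Fin (n + 1) → ℝ) → (Fin n → ℝ)) : Prop :=
  ∀ v : Fin (n + 1) → ℝ, v (Fin.last n) • G₁ v = F (v (Fin.last n) • (v ∘ Fin.castSucc))

theorem IsPolynomialMap.exists_isSegreLift {F : (Fin n → ℝ) → (Fin n → ℝ)}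
    (hF : IsPolynomialMap F) (h0 : F 0 = 0) :
    ∃ G₁, IsPolynomialMap G₁ ∧ IsSegreLift F G₁ := by
  obtain ⟨p, hp⟩ := hF
  have hdvd (i : Fin n) : X (Fin.last n) ∣
      bind₁ (fun j => X (Fin.last n) * X (Fin.castSucc j)) (p i) := by
    refine dvd_bind₁_of_constantCoeff_eq_zero ?_ fun j => dvd_mul_right _ _
    rw [← eval_zero, ← hp, h0, Pi.zero_apply]
  choose q hq using hdvd
  refine ⟨fun v i => eval v (q i), ⟨q, fun _ _ => rfl⟩, fun v => funext fun i => ?_⟩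
  calc v (Fin.last n) * eval v (q i)
      = eval v (bind₁ (fun j => X (Fin.last n) * X (Fin.castSucc j)) (p i)) := by simp [hq]
    _ = eval (fun j => eval v (X (Fin.last n) * X (Fin.castSucc j))) (p i) :=
        eval₂Hom_bind₁ _ _ _ _
    _ = F (v (Fin.last n) • (v ∘ Fin.castSucc)) i := by rw [hp]; congr; ext; simp

namespace IsSegreLift

variable {F : (Fin n → ℝ) → (Fin n → ℝ)}

theorem eq_of_continuous
    {G₁ G₂ : (Fin (n + 1) → ℝ) → (Fin n → ℝ)} (h₁ : IsSegreLift F G₁) (h₂ : IsSegreLift F G₂)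
    (hc₁ : Continuous G₁) (hc₂ : Continuous G₂) : G₁ = G₂ :=
  Continuous.ext_on (dense_setOf_apply_ne (Fin.last n) 0) hc₁ hc₂ fun v hv =>
    smul_right_injective _ hv ((h₁ v).trans (h₂ v).symm)

variable {G₁ : (Fin (n + 1) → ℝ) → (Fin n → ℝ)}

theorem fderiv_apply_of_apply_last_eq_zero (hG : IsSegreLift F G₁) {v : Fin (n + 1) → ℝ}
    (hv : v (Fin.last n) ≠ 0) (hG₁ : DifferentiableAt ℝ G₁ v)
    (hF : DifferentiableAt ℝ F (v (Fin.last n) • (v ∘ Fin.castSucc)))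
    {u : Fin (n + 1) → ℝ} (hu : u (Fin.last n) = 0) :
    fderiv ℝ G₁ v u = fderiv ℝ F (v (Fin.last n) • (v ∘ Fin.castSucc)) (u ∘ Fin.castSucc) := by
  set t := v (Fin.last n)
  set x := v ∘ Fin.castSucc
  -- along the line `s ↦ v + s • u` the last coordinate stays `t`
  have hline : (fun s : ℝ => t • G₁ (v + s • u)) =
      fun s => F (t • x + s • (t • (u ∘ Fin.castSucc))) := by
    ext s : 1
    have hlast : (v + s • u) (Fin.last n) = t := by simp [t, hu]
    rw [← hlast, hG]
    congr 1
    ext i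
    simp [x, hlast]
    ring
  have hG₁' : HasDerivAt (fun s : ℝ => t • G₁ (v + s • u)) (t • fderiv ℝ G₁ v u) 0 := by
    have := hG₁.hasFDerivAt.comp_hasDerivAt_of_eq (0 : ℝ)
      (((hasDerivAt_id (0 : ℝ)).smul_const u).const_add v) (by simp)
    rw [one_smul] at this
    exact this.const_smul t
  have hF' : HasDerivAt (fun s : ℝ => F (t • x + s • (t • (u ∘ Fin.castSucc))))
      (t • fderiv ℝ F (t • x) (u ∘ Fin.castSucc)) 0 := by
    have := hF.hasFDerivAt.comp_hasDerivAt_of_eq (0 : ℝ)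
      (((hasDerivAt_id (0 : ℝ)).smul_const (t • (u ∘ Fin.castSucc))).const_add (t • x)) (by simp)
    rw [one_smul, map_smul] at this
    exact this
  exact smul_right_injective _ hv (hG₁'.unique (hline ▸ hF'))

theorem jdet_snocLast (hG : IsSegreLift F G₁) (hG₁ : ContDiff ℝ 1 G₁) (hF : ContDiff ℝ 1 F)
    (v : Fin (n + 1) → ℝ) :
    jdet (snocLast G₁) v = jdet F (v (Fin.last n) • (v ∘ Fin.castSucc)) := by
  refine congrFun (Continuous.ext_on (dense_setOf_apply_ne (Fin.last n) 0)
    (contDiff_snocLast hG₁).continuous_jdet (hF.continuous_jdet.comp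
      ((continuous_apply _).smul (continuous_pi fun i => continuous_apply _)))
    fun w hw => ?_) v
  rw [Function.comp_apply, _root_.jdet_snocLast (hG₁.differentiable one_ne_zero w), jdet,
    ← LinearMap.det_toMatrix']
  congr 1
  ext i j
  rw [Matrix.of_apply, hG.fderiv_apply_of_apply_last_eq_zero hw (hG₁.differentiable one_ne_zero w)
    (hF.differentiable one_ne_zero _) (by simp)]
  have hsingle : (Pi.single (Fin.castSucc j) 1 : Fin (n + 1) → ℝ) ∘ Fin.castSucc =
      Pi.single j 1 := by
    ext k
    simp [Pi.single_apply]
  simp [LinearMap.toMatrix'_apply, hsingle, Function.comp_def]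

end IsSegreLift

end Segre

/-- for a polynomial map F : ℝⁿ → ℝⁿ with F(0) = 0 there is a unique
polynomial map G₁ : ℝⁿ × ℝ → ℝⁿ with t • G₁(x,t) = F(t • x), and the Segre extension
G(x,t) = (G₁(x,t), t) satisfies j(G)(x,t) = j(F)(t • x); in particular G is
nonsingular iff F is, and j(G) is a nonzero constant iff j(F) is.
(Here ℝⁿ × ℝ is modelled as Fin (n+1) → ℝ, a point v consisting of
x = v ∘ Fin.castSucc and t = v (Fin.last n).) -/
theorem stmt5 (n : ℕ) (F : (Fin n → ℝ) → (Fin n → ℝ))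
    (hF : IsPolynomialMap F) (h0 : F 0 = 0) :
    (∃! G₁ : (Fin (n + 1) → ℝ) → (Fin n → ℝ), IsPolynomialMap G₁ ∧
      ∀ v : Fin (n + 1) → ℝ,
        v (Fin.last n) • G₁ v = F (v (Fin.last n) • (v ∘ Fin.castSucc))) ∧
    ∀ G₁ : (Fin (n + 1) → ℝ) → (Fin n → ℝ), IsPolynomialMap G₁ →
      (∀ v : Fin (n + 1) → ℝ,
        v (Fin.last n) • G₁ v = F (v (Fin.last n) • (v ∘ Fin.castSucc))) →
      ∀ G : (Fin (n + 1) → ℝ) → (Fin (n + 1) → ℝ),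
        (∀ v, G v = Fin.snoc (G₁ v) (v (Fin.last n))) →
        (∀ v, jdet G v = jdet F (v (Fin.last n) • (v ∘ Fin.castSucc))) ∧
        ((∀ v, jdet G v ≠ 0) ↔ (∀ x, jdet F x ≠ 0)) ∧
        ((∃ c : ℝ, c ≠ 0 ∧ ∀ v, jdet G v = c) ↔ (∃ c : ℝ, c ≠ 0 ∧ ∀ x, jdet F x = c)) := by
  obtain ⟨G₁, hpoly, hlift⟩ := hF.exists_isSegreLift h0
  refine ⟨⟨G₁, ⟨hpoly, hlift⟩, fun G₁' h =>
    IsSegreLift.eq_of_continuous h.2 hlift h.1.continuous hpoly.continuous⟩, ?_⟩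
  intro G₁ hpoly hlift G hG
  obtain rfl : G = snocLast G₁ := funext hG
  have hj := IsSegreLift.jdet_snocLast hlift hpoly.contDiff hF.contDiff
  have hsurj : Function.Surjective fun v : Fin (n + 1) → ℝ => v (Fin.last n) • (v ∘ Fin.castSucc) :=
    fun x => ⟨Fin.snoc x 1, by simp⟩
  simp only [hj, hsurj.forall, implies_true, true_and]
end
end

section
/- Let F : ℝⁿ → ℝⁿ be a polynomial map with F(0) = 0 and let G be its Segre extension. If F is bijective and j(F)(0) ≠ 0, then G is bijective, and for every y ∈ ℝⁿ and t ≠ 0 one has G⁻¹(y,t) = ((1/t) • F⁻¹(t • y), t). -/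
noncomputable section

open Filter Topology

/- On a fibre t ≠ 0, G₁(·, t) = t⁻¹ F(t ·) is conjugate to F by a dilation, hence bijective with
inverse t⁻¹ F⁻¹(t ·). On the fibre t = 0, continuity of G₁ gives
G₁(x, 0) = lim_{t → 0} t⁻¹ F(t x) = DF(0) x, a linear isomorphism because j(F)(0) ≠ 0.
Since G preserves t and is bijective on every fibre, it is bijective. -/

theorem IsPolynomialMap.differentiable {ι κ : Type*} [Fintype ι]
    {F : (ι → ℝ) → (κ → ℝ)} (hF : IsPolynomialMap F) : Differentiable ℝ F := by
  obtain ⟨p, hp⟩ := hF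
  have hFe : F = fun x i => MvPolynomial.eval x (p i) := funext fun x => funext (hp x)
  subst hFe
  exact differentiable_pi.mpr fun i x =>
    (AnalyticOnNhd.eval_mvPolynomial (p i) x trivial).differentiableAt

theorem bijective_fderiv_of_jdet_ne_zero {E : Type*} [NormedAddCommGroup E] [NormedSpace ℝ E]
    [FiniteDimensional ℝ E] {F : E → E} {p : E} (h : jdet F p ≠ 0) :
    Function.Bijective (fderiv ℝ F p) :=
  (LinearMap.equivOfDetNeZero _ h).bijective

theorem eq_fderiv_apply_of_continuousAt_of_eq_inv_smul {𝕜 E E' : Type*}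
    [NontriviallyNormedField 𝕜] [NormedAddCommGroup E] [NormedSpace 𝕜 E]
    [NormedAddCommGroup E'] [NormedSpace 𝕜 E']
    {f : E → E'} (hf : DifferentiableAt 𝕜 f 0) (h0 : f 0 = 0) {x : E} {g : 𝕜 → E'}
    (hg : ContinuousAt g 0) (hgf : ∀ t ≠ 0, g t = t⁻¹ • f (t • x)) :
    g 0 = fderiv 𝕜 f 0 x := by
  have hline : HasDerivAt (fun t : 𝕜 => f (t • x)) (fderiv 𝕜 f 0 x) 0 := by
    have hsmul : HasDerivAt (fun t : 𝕜 => t • x) x 0 := by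
      simpa using (hasDerivAt_id (0 : 𝕜)).smul_const x
    have hf' : HasFDerivAt f (fderiv 𝕜 f 0) ((fun t : 𝕜 => t • x) 0) := by
      simpa using hf.hasFDerivAt
    simpa [Function.comp_def] using hf'.comp_hasDerivAt 0 hsmul
  have hslope : Filter.Tendsto g (𝓝[≠] 0) (𝓝 (fderiv 𝕜 f 0 x)) := by
    refine (hasDerivAt_iff_tendsto_slope.mp hline).congr' ?_
    filter_upwards [self_mem_nhdsWithin] with t ht
    simp [slope, h0, hgf t ht]
  exact tendsto_nhds_unique (hg.tendsto.mono_left nhdsWithin_le_nhds) hslope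

theorem Fin.bijective_of_snoc_fiberwise {α : Type*} {n : ℕ}
    {G : (Fin (n + 1) → α) → (Fin (n + 1) → α)} {g : α → (Fin n → α) → (Fin n → α)}
    (hG : ∀ x t, G (Fin.snoc x t) = Fin.snoc (g t x) t)
    (hg : ∀ t, Function.Bijective (g t)) :
    Function.Bijective G := by
  refine ⟨fun u v huv => ?_, fun v => ?_⟩
  · rw [← Fin.snoc_init_self u, ← Fin.snoc_init_self v, hG, hG] at huv
    obtain ⟨hinit, hlast⟩ := Fin.snoc_injective2 huv
    rw [hlast] at hinit
    rw [← Fin.snoc_init_self u, ← Fin.snoc_init_self v, (hg _).injective hinit, hlast]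
  · obtain ⟨x, hx⟩ := (hg (v (Fin.last n))).surjective (Fin.init v)
    exact ⟨Fin.snoc x (v (Fin.last n)), by rw [hG, hx, Fin.snoc_init_self]⟩

/-- if F : ℝⁿ → ℝⁿ is a bijective polynomial map with F(0) = 0 and
j(F)(0) ≠ 0, then its Segre extension G(x,t) = (G₁(x,t), t) (where G₁ is the unique
polynomial map with t • G₁(x,t) = F(t • x)) is bijective, and for t ≠ 0,
G⁻¹(y,t) = ((1/t) • F⁻¹(t • y), t).
(ℝⁿ × ℝ is modelled as Fin (n+1) → ℝ via Fin.snoc.) -/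
theorem stmt6 (n : ℕ) (F : (Fin n → ℝ) → (Fin n → ℝ))
    (hF : IsPolynomialMap F) (h0 : F 0 = 0)
    (G₁ : (Fin (n + 1) → ℝ) → (Fin n → ℝ)) (hG₁ : IsPolynomialMap G₁)
    (hG₁F : ∀ v : Fin (n + 1) → ℝ,
      v (Fin.last n) • G₁ v = F (v (Fin.last n) • (v ∘ Fin.castSucc)))
    (G : (Fin (n + 1) → ℝ) → (Fin (n + 1) → ℝ))
    (hG : ∀ v, G v = Fin.snoc (G₁ v) (v (Fin.last n)))
    (hbij : Function.Bijective F) (hj0 : jdet F 0 ≠ 0) :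
    Function.Bijective G ∧
    ∀ (y : Fin n → ℝ) (t : ℝ), t ≠ 0 →
      Function.invFun G (Fin.snoc y t) =
        Fin.snoc (t⁻¹ • Function.invFun F (t • y)) t := by
  have hG_snoc : ∀ x t, G (Fin.snoc x t) = Fin.snoc (G₁ (Fin.snoc x t)) t := by
    simp [hG]
  have hG₁_ne : ∀ x, ∀ t ≠ (0 : ℝ), G₁ (Fin.snoc x t) = t⁻¹ • F (t • x) := by
    intro x t ht
    rw [eq_inv_smul_iff₀ ht]
    simpa using hG₁F (Fin.snoc x t)
  have hG₁_zero : ∀ x, G₁ (Fin.snoc x 0) = fderiv ℝ F 0 x := fun x =>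
    eq_fderiv_apply_of_continuousAt_of_eq_inv_smul (hF.differentiable 0) h0
      ((hG₁.differentiable.continuous.comp (by fun_prop)).continuousAt) (hG₁_ne x)
  have hbijG : Function.Bijective G := by
    refine Fin.bijective_of_snoc_fiberwise hG_snoc fun t => ?_
    by_cases ht : t = 0
    · subst ht
      simpa only [hG₁_zero] using bijective_fderiv_of_jdet_ne_zero hj0
    · simpa only [hG₁_ne _ t ht, Function.comp_def] using
        (MulAction.bijective₀ (inv_ne_zero ht)).comp (hbij.comp (MulAction.bijective₀ ht))
  refine ⟨hbijG, fun y t ht => ?_⟩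
  have hsol : G (Fin.snoc (t⁻¹ • Function.invFun F (t • y)) t) = Fin.snoc y t := by
    rw [hG_snoc, hG₁_ne _ t ht, smul_inv_smul₀ ht, Function.invFun_eq (hbij.surjective _),
      inv_smul_smul₀ ht]
  rw [← hsol, Function.leftInverse_invFun hbijG.injective]

end
end

section
/- Let m ≤ n, let A be an n×n real matrix, and let F : ℝⁿ → ℝⁿ be F(x) = x + (Ax)^{*3}. Let B be an m×n real matrix and C an n×m real matrix with BC = I_m and ker B = ker A, and define G : ℝᵐ → ℝᵐ by G(x) = B·F(Cx). Then there exist linear isomorphisms B' : ℝⁿ → ℝᵐ × ℝ^{n−m} and C' : ℝᵐ × ℝ^{n−m} → ℝⁿ and a map H : ℝᵐ → ℝ^{n−m} each of whose components is a homogeneous polynomial of degree 3, such that B'(F(C'(x,z))) = (G(x), z + H(x)) for all x ∈ ℝᵐ and z ∈ ℝ^{n−m}. -/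
noncomputable section

/-- a Gorni–Zampieri pairing (B, C with BC = I, ker B = ker A,
G(x) = B·F(Cx)) between the cubic homogeneous map G : ℝᵐ → ℝᵐ and the cubic linear
map F(x) = x + (Ax)^{*3} : ℝⁿ → ℝⁿ (m ≤ n) yields linear isomorphisms
B' : ℝⁿ → ℝᵐ × ℝ^{n−m} and C' : ℝᵐ × ℝ^{n−m} → ℝⁿ and a cubic homogeneous map
H : ℝᵐ → ℝ^{n−m} with B'(F(C'(x,z))) = (G(x), z + H(x)). -/
theorem stmt10 (n m : ℕ) (hmn : m ≤ n) (A : Matrix (Fin n) (Fin n) ℝ)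
    (F : (Fin n → ℝ) → (Fin n → ℝ))
    (hF : ∀ x, F x = x + fun i => (A.mulVec x i) ^ 3)
    (B : Matrix (Fin m) (Fin n) ℝ) (C : Matrix (Fin n) (Fin m) ℝ)
    (hBC : B * C = 1)
    (hker : LinearMap.ker B.mulVecLin = LinearMap.ker A.mulVecLin)
    (G : (Fin m → ℝ) → (Fin m → ℝ))
    (hG : ∀ x, G x = B.mulVec (F (C.mulVec x))) :
    ∃ (B' : (Fin n → ℝ) ≃ₗ[ℝ] (Fin m → ℝ) × (Fin (n - m) → ℝ))
      (C' : ((Fin m → ℝ) × (Fin (n - m) → ℝ)) ≃ₗ[ℝ] (Fin n → ℝ))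
      (H : (Fin m → ℝ) → (Fin (n - m) → ℝ)),
      (∃ p : Fin (n - m) → MvPolynomial (Fin m) ℝ,
        (∀ i, (p i).IsHomogeneous 3) ∧ ∀ x i, H x i = MvPolynomial.eval x (p i)) ∧
      ∀ (x : Fin m → ℝ) (z : Fin (n - m) → ℝ),
        B' (F (C' (x, z))) = (G x, z + H x) := by
  classical
  set K := LinearMap.ker B.mulVecLin with hKdef
  -- B is surjective since BC = 1
  have hBC' : ∀ y : Fin m → ℝ, B.mulVec (C.mulVec y) = y := by
    intro y
    rw [Matrix.mulVec_mulVec, hBC, Matrix.one_mulVec]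
  have hBsurj : Function.Surjective B.mulVecLin := fun y =>
    ⟨C.mulVec y, hBC' y⟩
  -- dimension of kernel
  have hK : Module.finrank ℝ K = n - m := by
    have h1 := LinearMap.finrank_range_add_finrank_ker B.mulVecLin
    rw [LinearMap.range_eq_top.mpr hBsurj, ← hKdef] at h1
    simp only [finrank_top, Module.finrank_fin_fun] at h1
    omega
  -- identify kernel with ℝ^(n-m)
  have hK' : Module.finrank ℝ (Fin (n - m) → ℝ) = Module.finrank ℝ K := by
    rw [hK, Module.finrank_fin_fun]
  let ι : (Fin (n - m) → ℝ) ≃ₗ[ℝ] K := LinearEquiv.ofFinrankEq _ _ hK'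
  -- the combined linear map E(x,z) = C x + ι z
  let E : ((Fin m → ℝ) × (Fin (n - m) → ℝ)) →ₗ[ℝ] (Fin n → ℝ) :=
    C.mulVecLin.coprod (K.subtype ∘ₗ ι.toLinearMap)
  have hE : ∀ (x : Fin m → ℝ) (z : Fin (n - m) → ℝ),
      E (x, z) = C.mulVec x + (ι z : Fin n → ℝ) := by
    intro x z; rfl
  have hEinj : Function.Injective E := by
    rw [injective_iff_map_eq_zero]
    rintro ⟨x, z⟩ h
    rw [hE] at h
    have hx : x = 0 := by
      have := congrArg B.mulVec h
      rw [Matrix.mulVec_add, hBC' x, Matrix.mulVec_zero] at this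
      have hz0 : B.mulVec ((ι z : Fin n → ℝ)) = 0 := (ι z).2
      rw [hz0, add_zero] at this
      exact this
    have hz : z = 0 := by
      rw [hx, Matrix.mulVec_zero, zero_add] at h
      have : ι z = 0 := Subtype.ext h
      simpa using ι.injective (by simpa using this)
    simp [hx, hz]
  have hdim : Module.finrank ℝ ((Fin m → ℝ) × (Fin (n - m) → ℝ)) =
      Module.finrank ℝ (Fin n → ℝ) := by
    simp [Module.finrank_prod, Module.finrank_fin_fun]
    omega
  let C' := LinearMap.linearEquivOfInjective E hEinj hdim
  have hC' : ∀ p, C' p = E p := fun p => rfl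
  -- the cubic part
  let v : (Fin m → ℝ) → (Fin n → ℝ) := fun x i => ((A * C).mulVec x i) ^ 3
  let D : (Fin n → ℝ) →ₗ[ℝ] (Fin n → ℝ) := LinearMap.id - (C * B).mulVecLin
  have hmem : ∀ w : Fin n → ℝ, D w ∈ K := by
    intro w
    simp only [hKdef, LinearMap.mem_ker, D, LinearMap.sub_apply, LinearMap.id_apply,
      Matrix.mulVecLin_apply]
    rw [Matrix.mulVec_sub, ← Matrix.mulVec_mulVec, hBC', sub_self]
  let P : (Fin n → ℝ) →ₗ[ℝ] K := LinearMap.codRestrict K D hmem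
  let ψ : (Fin n → ℝ) →ₗ[ℝ] (Fin (n - m) → ℝ) := ι.symm.toLinearMap ∘ₗ P
  let H : (Fin m → ℝ) → (Fin (n - m) → ℝ) := fun x => ψ (v x)
  have hιH : ∀ x, ((ι (H x) : K) : Fin n → ℝ) = v x - (C * B).mulVec (v x) := by
    intro x
    show ((ι (ι.symm (P (v x))) : K) : Fin n → ℝ) = _
    rw [ι.apply_symm_apply]
    rfl
  -- G x = x + B (v x)
  have hGx : ∀ x, G x = x + B.mulVec (v x) := by
    intro x
    rw [hG, hF, Matrix.mulVec_add, hBC' x]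
    congr 1
    funext i
    rw [Matrix.mulVec_mulVec]
  refine ⟨C'.symm, C', H, ⟨?_, ?_⟩⟩
  · -- polynomial part
    let M := LinearMap.toMatrix' ψ
    refine ⟨fun i => ∑ j : Fin n, MvPolynomial.C (M i j) *
      (∑ k : Fin m, MvPolynomial.C ((A * C) j k) * MvPolynomial.X k) ^ 3, ?_, ?_⟩
    · intro i
      apply MvPolynomial.IsHomogeneous.sum
      intro j _
      have h1 : (∑ k : Fin m, MvPolynomial.C ((A * C) j k) *
          MvPolynomial.X k : MvPolynomial (Fin m) ℝ).IsHomogeneous 1 := by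
        apply MvPolynomial.IsHomogeneous.sum
        intro k _
        simpa using (MvPolynomial.isHomogeneous_C (Fin m) ((A * C) j k)).mul
          (MvPolynomial.isHomogeneous_X ℝ k)
      have h3 : ((∑ k : Fin m, MvPolynomial.C ((A * C) j k) *
          MvPolynomial.X k : MvPolynomial (Fin m) ℝ) ^ 3).IsHomogeneous 3 := by
        simpa using h1.pow 3
      simpa using (MvPolynomial.isHomogeneous_C (Fin m) (M i j)).mul h3
    · intro x i
      have hψ : ψ (v x) = M.mulVec (v x) := by
        conv_lhs => rw [← Matrix.toLin'_toMatrix' ψ]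
        rw [Matrix.toLin'_apply]
      show ψ (v x) i = _
      rw [hψ]
      simp only [v, Matrix.mulVec, dotProduct, map_sum, map_mul, MvPolynomial.eval_C,
        map_pow, MvPolynomial.eval_X]
  · intro x z
    rw [LinearEquiv.symm_apply_eq, hC', hC', hE]
    have hAι : A.mulVec ((ι z : Fin n → ℝ)) = 0 := by
      have : (ι z : Fin n → ℝ) ∈ LinearMap.ker A.mulVecLin := hker ▸ (ι z).2
      exact this
    have hAE : A.mulVec (C.mulVec x + (ι z : Fin n → ℝ)) = (A * C).mulVec x := by
      rw [Matrix.mulVec_add, hAι, add_zero, Matrix.mulVec_mulVec]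
    rw [hF]
    have hcube : (fun i => (A.mulVec (C.mulVec x + (ι z : Fin n → ℝ)) i) ^ 3) = v x := by
      funext i; rw [hAE]
    rw [hcube, hE, hGx, map_add, Matrix.mulVec_add]
    rw [Submodule.coe_add, hιH, ← Matrix.mulVec_mulVec]
    abel
end
end

section
/- Let F : ℝⁿ → ℝⁿ be twice continuously differentiable, and define G : ℝⁿ × ℝⁿ → ℝⁿ × ℝⁿ by G(x,v) = (F(v), (J(F)(v))ᵀ x). Then G is differentiable, and the Jacobian matrix of G at every point of ℝⁿ × ℝⁿ is a symmetric 2n×2n matrix. -/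
/-!
`G` is the gradient of `H(x, v) = ⟪x, F v⟫` (`pairingPotential F`):
indeed `∂H/∂x = F v` and `∂H/∂v = J(F)(v)ᵀ x`.
Hence `J(G)` is the Hessian of `H`, which is symmetric by Schwarz's theorem because `H` is `C²`.
-/

open Matrix

noncomputable section

/-- The Jacobian matrix J(F)(p) of a map F between real coordinate spaces. -/
def Jmat {ι κ : Type*} [Fintype ι] [Fintype κ] [DecidableEq ι]
    (F : (ι → ℝ) → (κ → ℝ)) (p : ι → ℝ) : Matrix κ ι ℝ :=
  LinearMap.toMatrix' (fderiv ℝ F p : (ι → ℝ) →ₗ[ℝ] (κ → ℝ))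

-- Mathlib's `gradient` needs an inner product space, which `ι → ℝ` (sup norm) is not.
def coordGrad {ι : Type*} [Fintype ι] [DecidableEq ι] (H : (ι → ℝ) → ℝ) (w : ι → ℝ) :
    ι → ℝ :=
  fun i => fderiv ℝ H w (Pi.single i 1)

section coordGrad

variable {ι : Type*} [Fintype ι] [DecidableEq ι] {H : (ι → ℝ) → ℝ}

def evalBasisCLM : ((ι → ℝ) →L[ℝ] ℝ) →L[ℝ] (ι → ℝ) :=
  ContinuousLinearMap.pi fun i => ContinuousLinearMap.apply ℝ ℝ (Pi.single i 1)

theorem coordGrad_eq_comp (H : (ι → ℝ) → ℝ) : coordGrad H = evalBasisCLM ∘ fderiv ℝ H := rfl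

theorem ContDiff.coordGrad {n : WithTop ℕ∞} (hH : ContDiff ℝ (n + 1) H) :
    ContDiff ℝ n (coordGrad H) := by
  rw [coordGrad_eq_comp]
  exact evalBasisCLM.contDiff.comp (hH.fderiv_right le_rfl)

theorem jmat_coordGrad_apply (hH : ContDiff ℝ 2 H) (w : ι → ℝ) (i j : ι) :
    Jmat (coordGrad H) w i j = fderiv ℝ (fderiv ℝ H) w (Pi.single j 1) (Pi.single i 1) := by
  have hH' : DifferentiableAt ℝ (fderiv ℝ H) w :=
    (hH.fderiv_right (m := 1) le_rfl).differentiable one_ne_zero w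
  rw [Jmat, LinearMap.toMatrix'_apply, coordGrad_eq_comp, ContinuousLinearMap.coe_coe,
    fderiv_comp w evalBasisCLM.differentiableAt hH', evalBasisCLM.fderiv]
  rfl

theorem isSymm_jmat_coordGrad (hH : ContDiff ℝ 2 H) (w : ι → ℝ) :
    (Jmat (coordGrad H) w).IsSymm := by
  ext i j
  rw [Matrix.transpose_apply, jmat_coordGrad_apply hH, jmat_coordGrad_apply hH]
  exact (hH.contDiffAt.isSymmSndFDerivAt (by simp)).eq _ _

end coordGrad

section pairing

variable {ι κ : Type*} [Fintype ι] [Fintype κ] {F : (κ → ℝ) → (ι → ℝ)}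

def pairingPotential (F : (κ → ℝ) → (ι → ℝ)) (w : ι ⊕ κ → ℝ) : ℝ :=
  (w ∘ Sum.inl) ⬝ᵥ F (w ∘ Sum.inr)

theorem contDiff_pairingPotential {n : WithTop ℕ∞} (hF : ContDiff ℝ n F) :
    ContDiff ℝ n (pairingPotential F) := by
  unfold pairingPotential
  simp only [dotProduct, Function.comp_apply]
  fun_prop

theorem coordGrad_pairingPotential [DecidableEq ι] [DecidableEq κ] (hF : Differentiable ℝ F)
    (w : ι ⊕ κ → ℝ) :
    coordGrad (pairingPotential F) w =
      Sum.elim (F (w ∘ Sum.inr)) ((Jmat F (w ∘ Sum.inr))ᵀ *ᵥ (w ∘ Sum.inl)) := by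
  let R : (ι ⊕ κ → ℝ) →L[ℝ] (κ → ℝ) :=
    ContinuousLinearMap.pi fun k => ContinuousLinearMap.proj (Sum.inr k)
  have hFR : ∀ i, HasFDerivAt (fun w : ι ⊕ κ → ℝ => F (w ∘ Sum.inr) i)
      ((ContinuousLinearMap.proj i).comp ((fderiv ℝ F (w ∘ Sum.inr)).comp R)) w := fun i =>
    hasFDerivAt_pi'.1 ((hF _).hasFDerivAt.comp w R.hasFDerivAt) i
  have hH : HasFDerivAt (pairingPotential F)
      (∑ i, (w (Sum.inl i) • (ContinuousLinearMap.proj i).comp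
          ((fderiv ℝ F (w ∘ Sum.inr)).comp R) +
        F (w ∘ Sum.inr) i • ContinuousLinearMap.proj (Sum.inl i))) w :=
    HasFDerivAt.fun_sum fun i _ => (hasFDerivAt_apply (Sum.inl i) w).fun_mul (hFR i)
  have hR_inl : ∀ i, R (Pi.single (Sum.inl i) 1) = 0 := fun i => by
    ext k; simp [R]
  have hR_inr : ∀ k, R (Pi.single (Sum.inr k) 1) = Pi.single k 1 := fun k => by
    ext k'; simp [R, Pi.single_apply]
  funext a
  rw [coordGrad, hH.fderiv]
  cases a with
  | inl i => simp [hR_inl, Pi.single_apply]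
  | inr k => simp [hR_inr, Jmat, mulVec, dotProduct, mul_comm]

end pairing

-- ℝⁿ × ℝⁿ is modelled as `Fin n ⊕ Fin n → ℝ`, with `x = w ∘ Sum.inl` and `v = w ∘ Sum.inr`.
/-- for F : ℝⁿ → ℝⁿ twice continuously differentiable, the map
G(x,v) = (F(v), (J(F)(v))ᵀ x) is differentiable and its Jacobian matrix at every
point is a symmetric 2n×2n matrix.
(ℝⁿ × ℝⁿ is modelled as Fin n ⊕ Fin n → ℝ, with x = w ∘ Sum.inl and
v = w ∘ Sum.inr.) -/
theorem stmt11 (n : ℕ) (F : (Fin n → ℝ) → (Fin n → ℝ)) (hF : ContDiff ℝ 2 F)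
    (G : (Fin n ⊕ Fin n → ℝ) → (Fin n ⊕ Fin n → ℝ))
    (hG : ∀ w, G w = Sum.elim
      (F (w ∘ Sum.inr))
      ((Jmat F (w ∘ Sum.inr))ᵀ.mulVec (w ∘ Sum.inl))) :
    Differentiable ℝ G ∧ ∀ w, (Jmat G w).IsSymm := by
  have hH : ContDiff ℝ 2 (pairingPotential F) := contDiff_pairingPotential hF
  obtain rfl : G = coordGrad (pairingPotential F) :=
    funext fun w => (hG w).trans
      (coordGrad_pairingPotential (hF.differentiable two_ne_zero) w).symm
  exact ⟨(hH.coordGrad (n := 1)).differentiable one_ne_zero, isSymm_jmat_coordGrad hH⟩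
end
end

section
/- Let F : ℝⁿ → ℝⁿ be twice continuously differentiable, and define G : ℝⁿ × ℝⁿ → ℝⁿ × ℝⁿ by G(x,v) = (F(v), (J(F)(v))ᵀ x). Then for all (x,v) ∈ ℝⁿ × ℝⁿ, the Jacobian determinant of G satisfies j(G)(x,v) = (−1)ⁿ (j(F)(v))². In particular, if F is nonsingular then G is nonsingular. -/
/-!
At `w = (x, v)` the Jacobian matrix of `G` has the block form `[[0, J], [Jᵀ, M]]` with
`J = J(F)(v)`: the first component of `G` does not depend on `x`, and the second is linear in `x`
with matrix `Jᵀ`. The block `M` involves the second derivative of `F` (this is where `F ∈ C²` is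
needed) but does not affect the determinant: swapping the two column blocks costs `(-1)ⁿ`, leaving
a block-triangular matrix of determinant `det J · det Jᵀ = (det J)²`.
-/

open Matrix

noncomputable section

theorem jdet_eq_det_Jmat {ι : Type*} [Fintype ι] [DecidableEq ι] (F : (ι → ℝ) → (ι → ℝ))
    (p : ι → ℝ) : jdet F p = (Jmat F p).det :=
  (LinearMap.det_toMatrix' _).symm

theorem hasDerivAt_line_apply_Jmat {ι κ : Type*} [Fintype ι] [Fintype κ] [DecidableEq ι]
    {F : (ι → ℝ) → (κ → ℝ)} {p : ι → ℝ} (hF : DifferentiableAt ℝ F p) (i : κ) (j : ι) :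
    HasDerivAt (fun t : ℝ => F (p + t • Pi.single j 1) i) (Jmat F p i j) 0 := by
  have hline : HasDerivAt (fun t : ℝ => p + t • Pi.single j (1 : ℝ)) (Pi.single j 1) 0 := by
    simpa using ((hasDerivAt_id (0 : ℝ)).smul_const (Pi.single j (1 : ℝ))).const_add p
  have hF' : HasFDerivAt F (fderiv ℝ F p) (p + (0 : ℝ) • Pi.single j 1) := by
    simpa using hF.hasFDerivAt
  exact hasDerivAt_pi.mp (hF'.comp_hasDerivAt 0 hline) i

theorem differentiableAt_Jmat_apply {ι κ : Type*} [Fintype ι] [Fintype κ] [DecidableEq ι]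
    {F : (ι → ℝ) → (κ → ℝ)} {p : ι → ℝ} (hF : DifferentiableAt ℝ (fderiv ℝ F) p) (i : κ) (j : ι) :
    DifferentiableAt ℝ (fun q => Jmat F q i j) p := by
  simp only [Jmat, LinearMap.toMatrix'_apply, ContinuousLinearMap.coe_coe]
  fun_prop

theorem det_fromBlocks_zero_one_one_zero {m R : Type*} [Fintype m] [DecidableEq m] [CommRing R] :
    (fromBlocks 0 1 1 0 : Matrix (m ⊕ m) (m ⊕ m) R).det = (-1) ^ Fintype.card m := by
  have hfactor : (fromBlocks 0 1 1 0 : Matrix (m ⊕ m) (m ⊕ m) R) =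
      fromBlocks 1 1 0 1 * fromBlocks 1 0 (-1) 1 * fromBlocks 1 1 0 1 * fromBlocks (-1) 0 0 1 := by
    simp [fromBlocks_multiply]
  simp [hfactor, det_neg]

theorem det_fromBlocks_zero₁₁ {m R : Type*} [Fintype m] [DecidableEq m] [CommRing R]
    (B C D : Matrix m m R) :
    (fromBlocks 0 B C D).det = (-1) ^ Fintype.card m * B.det * C.det := by
  have hswap : fromBlocks 0 B C D = fromBlocks B 0 D C * fromBlocks 0 1 1 0 := by
    simp [fromBlocks_multiply]
  rw [hswap, det_mul, det_fromBlocks_zero₁₂, det_fromBlocks_zero_one_one_zero]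
  ring

section SumLines

variable {ι κ : Type*} [DecidableEq ι] [DecidableEq κ] (w : ι ⊕ κ → ℝ) (t : ℝ)

theorem add_smul_single_inl_comp_inl (j : ι) :
    (w + t • Pi.single (Sum.inl j) 1) ∘ Sum.inl = w ∘ Sum.inl + t • Pi.single j 1 := by
  ext k; simp [Pi.single_apply]

theorem add_smul_single_inl_comp_inr (j : ι) :
    (w + t • Pi.single (Sum.inl j) 1) ∘ Sum.inr = w ∘ Sum.inr := by
  ext k; simp

theorem add_smul_single_inr_comp_inr (j : κ) :
    (w + t • Pi.single (Sum.inr j) 1) ∘ Sum.inr = w ∘ Sum.inr + t • Pi.single j 1 := by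
  ext k; simp [Pi.single_apply]

end SumLines

theorem Jmat_sumElim_mulVec {κ ι μ ν : Type*} [Fintype κ] [Fintype ι] [Fintype μ] [Fintype ν]
    [DecidableEq κ] [DecidableEq ι] {f : (ι → ℝ) → (μ → ℝ)} {A : (ι → ℝ) → Matrix ν κ ℝ}
    {w : κ ⊕ ι → ℝ} (hf : DifferentiableAt ℝ f (w ∘ Sum.inr))
    (hA : ∀ i k, DifferentiableAt ℝ (fun v => A v i k) (w ∘ Sum.inr)) :
    ∃ M, Jmat (fun w => Sum.elim (f (w ∘ Sum.inr)) (A (w ∘ Sum.inr) *ᵥ (w ∘ Sum.inl))) w =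
      fromBlocks 0 (Jmat f (w ∘ Sum.inr)) (A (w ∘ Sum.inr)) M := by
  set G := fun w : κ ⊕ ι → ℝ => Sum.elim (f (w ∘ Sum.inr)) (A (w ∘ Sum.inr) *ᵥ (w ∘ Sum.inl))
  have hG : DifferentiableAt ℝ G w := by
    refine differentiableAt_pi.2 ?_
    rintro (i | i)
    · simp only [G, Sum.elim_inl]
      fun_prop
    · simp only [G, Sum.elim_inr, mulVec, dotProduct]
      fun_prop
  refine ⟨(Jmat G w).toBlocks₂₂, ?_⟩
  ext (i | i) (j | j)
  · refine (hasDerivAt_line_apply_Jmat hG (.inl i) (.inl j)).unique ?_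
    simpa [G, add_smul_single_inl_comp_inr] using hasDerivAt_const (0 : ℝ) (f (w ∘ Sum.inr) i)
  · refine (hasDerivAt_line_apply_Jmat hG (.inl i) (.inr j)).unique ?_
    simpa [G, add_smul_single_inr_comp_inr] using hasDerivAt_line_apply_Jmat hf i j
  · refine (hasDerivAt_line_apply_Jmat hG (.inr i) (.inl j)).unique ?_
    simp only [G, add_smul_single_inl_comp_inr, add_smul_single_inl_comp_inl, Sum.elim_inr,
      mulVec_add, mulVec_smul, mulVec_single_one]
    simpa using ((hasDerivAt_id (0 : ℝ)).mul_const (A (w ∘ Sum.inr) i j)).const_add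
      ((A (w ∘ Sum.inr) *ᵥ (w ∘ Sum.inl)) i)
  · rfl

/-- for F : ℝⁿ → ℝⁿ twice continuously differentiable, the map
G(x,v) = (F(v), (J(F)(v))ᵀ x) satisfies j(G)(x,v) = (−1)ⁿ (j(F)(v))²; in
particular if F is nonsingular then so is G.
(ℝⁿ × ℝⁿ is modelled as Fin n ⊕ Fin n → ℝ, with x = w ∘ Sum.inl and
v = w ∘ Sum.inr.) -/
theorem stmt12 (n : ℕ) (F : (Fin n → ℝ) → (Fin n → ℝ)) (hF : ContDiff ℝ 2 F)
    (G : (Fin n ⊕ Fin n → ℝ) → (Fin n ⊕ Fin n → ℝ))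
    (hG : ∀ w, G w = Sum.elim
      (F (w ∘ Sum.inr))
      ((Jmat F (w ∘ Sum.inr))ᵀ.mulVec (w ∘ Sum.inl))) :
    (∀ w, jdet G w = (-1 : ℝ) ^ n * (jdet F (w ∘ Sum.inr)) ^ 2) ∧
    ((∀ x, jdet F x ≠ 0) → ∀ w, jdet G w ≠ 0) := by
  have hF₁ : Differentiable ℝ F := hF.differentiable two_ne_zero
  have hF₂ : Differentiable ℝ (fderiv ℝ F) :=
    (hF.fderiv_right (m := 1) le_rfl).differentiable one_ne_zero
  have hdet : ∀ w, jdet G w = (-1 : ℝ) ^ n * (jdet F (w ∘ Sum.inr)) ^ 2 := by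
    intro w
    obtain ⟨M, hM⟩ := Jmat_sumElim_mulVec (A := fun v => (Jmat F v)ᵀ) (w := w) (hF₁ _)
      (fun i k => differentiableAt_Jmat_apply (hF₂ _) k i)
    rw [funext hG, jdet_eq_det_Jmat, hM, det_fromBlocks_zero₁₁, det_transpose, Fintype.card_fin,
      jdet_eq_det_Jmat]
    ring
  refine ⟨hdet, fun hF0 w => ?_⟩
  rw [hdet]
  exact mul_ne_zero (pow_ne_zero _ (by norm_num)) (pow_ne_zero _ (hF0 _))
end
end

section
/- Let Q, C : ℝⁿ → ℝⁿ be polynomial maps whose components are homogeneous of degrees 2 and 3 respectively. Define F' , A₁, A₂, G : ℝⁿ × ℝⁿ × ℝ → ℝⁿ × ℝⁿ × ℝ by F'(x,y,t) = (x + tQ(x) + t²C(x), y, t), A₁(x,y,t) = (x − t²y, y, t), A₂(x,y,t) = (x, y + C(x), t), and G(x,y,t) = (x − t²y + tQ(x), y + C(x), t). Then A₁ ∘ F' ∘ A₂ = G, the maps A₁ and A₂ are bijections with polynomial inverses (x,y,t) ↦ (x + t²y, y, t) and (x,y,t) ↦ (x, y − C(x), t) respectively, and G minus the identity map has all components homogeneous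 of degree 3 in the variables (x,y,t), so that G is a map of cubic homogeneous type (a Yagzhev map). -/
noncomputable section

/-- Assemble a point (x, y, t) ∈ ℝⁿ × ℝⁿ × ℝ, modelled on Fin n ⊕ Fin n ⊕ Fin 1. -/
def mk3 {n : ℕ} (x y : Fin n → ℝ) (t : ℝ) : Fin n ⊕ Fin n ⊕ Fin 1 → ℝ :=
  Sum.elim x (Sum.elim y fun _ => t)

/-- The x-component of a point of ℝⁿ × ℝⁿ × ℝ. -/
def px {n : ℕ} (w : Fin n ⊕ Fin n ⊕ Fin 1 → ℝ) : Fin n → ℝ := fun i => w (Sum.inl i)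

/-- The y-component of a point of ℝⁿ × ℝⁿ × ℝ. -/
def py {n : ℕ} (w : Fin n ⊕ Fin n ⊕ Fin 1 → ℝ) : Fin n → ℝ :=
  fun i => w (Sum.inr (Sum.inl i))

/-- The t-component of a point of ℝⁿ × ℝⁿ × ℝ. -/
def pt {n : ℕ} (w : Fin n ⊕ Fin n ⊕ Fin 1 → ℝ) : ℝ := w (Sum.inr (Sum.inr 0))

/-- for polynomial maps Q, C : ℝⁿ → ℝⁿ with components homogeneous of
degrees 2 and 3, the maps F'(x,y,t) = (x + tQ(x) + t²C(x), y, t),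
A₁(x,y,t) = (x − t²y, y, t), A₂(x,y,t) = (x, y + C(x), t) and
G(x,y,t) = (x − t²y + tQ(x), y + C(x), t) satisfy A₁ ∘ F' ∘ A₂ = G; A₁ and A₂ are
bijections with polynomial inverses (x,y,t) ↦ (x + t²y, y, t) and
(x,y,t) ↦ (x, y − C(x), t); and G minus the identity has all components homogeneous
of degree 3 in (x,y,t), so G is a Yagzhev map. -/
theorem stmt17 (n : ℕ)
    (Q C : (Fin n → ℝ) → (Fin n → ℝ))
    (hQ : ∃ q : Fin n → MvPolynomial (Fin n) ℝ,
      (∀ i, (q i).IsHomogeneous 2) ∧ ∀ x i, Q x i = MvPolynomial.eval x (q i))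
    (hC : ∃ c : Fin n → MvPolynomial (Fin n) ℝ,
      (∀ i, (c i).IsHomogeneous 3) ∧ ∀ x i, C x i = MvPolynomial.eval x (c i))
    (F' A₁ A₂ G : (Fin n ⊕ Fin n ⊕ Fin 1 → ℝ) → (Fin n ⊕ Fin n ⊕ Fin 1 → ℝ))
    (hF' : ∀ w, F' w = mk3 (px w + pt w • Q (px w) + (pt w) ^ 2 • C (px w)) (py w) (pt w))
    (hA₁ : ∀ w, A₁ w = mk3 (px w - (pt w) ^ 2 • py w) (py w) (pt w))
    (hA₂ : ∀ w, A₂ w = mk3 (px w) (py w + C (px w)) (pt w))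
    (hG : ∀ w, G w = mk3 (px w - (pt w) ^ 2 • py w + pt w • Q (px w)) (py w + C (px w)) (pt w)) :
    A₁ ∘ F' ∘ A₂ = G ∧
    (Function.Bijective A₁ ∧
      Function.LeftInverse (fun w => mk3 (px w + (pt w) ^ 2 • py w) (py w) (pt w)) A₁ ∧
      Function.RightInverse (fun w => mk3 (px w + (pt w) ^ 2 • py w) (py w) (pt w)) A₁ ∧
      IsPolynomialMap (fun w : Fin n ⊕ Fin n ⊕ Fin 1 → ℝ => mk3 (px w + (pt w) ^ 2 • py w) (py w) (pt w))) ∧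
    (Function.Bijective A₂ ∧
      Function.LeftInverse (fun w => mk3 (px w) (py w - C (px w)) (pt w)) A₂ ∧
      Function.RightInverse (fun w => mk3 (px w) (py w - C (px w)) (pt w)) A₂ ∧
      IsPolynomialMap (fun w : Fin n ⊕ Fin n ⊕ Fin 1 → ℝ => mk3 (px w) (py w - C (px w)) (pt w))) ∧
    ∃ H : Fin n ⊕ Fin n ⊕ Fin 1 → MvPolynomial (Fin n ⊕ Fin n ⊕ Fin 1) ℝ,
      (∀ i, (H i).IsHomogeneous 3) ∧
      ∀ w i, G w i = w i + MvPolynomial.eval w (H i) := by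
  obtain ⟨q, hq, hqe⟩ := hQ
  obtain ⟨c, hc, hce⟩ := hC
  have mk3_proj : ∀ w : Fin n ⊕ Fin n ⊕ Fin 1 → ℝ, mk3 (px w) (py w) (pt w) = w := by
    intro w; funext i
    rcases i with i | i | j
    · rfl
    · rfl
    · have : j = 0 := Subsingleton.elim j 0
      subst this; rfl
  have evq : ∀ w (i : Fin n),
      MvPolynomial.eval w (MvPolynomial.rename (Sum.inl : Fin n → Fin n ⊕ Fin n ⊕ Fin 1) (q i))
        = Q (px w) i := by
    intro w i; rw [MvPolynomial.eval_rename, hqe]; rfl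
  have evc : ∀ w (i : Fin n),
      MvPolynomial.eval w (MvPolynomial.rename (Sum.inl : Fin n → Fin n ⊕ Fin n ⊕ Fin 1) (c i))
        = C (px w) i := by
    intro w i; rw [MvPolynomial.eval_rename, hce]; rfl
  have hA₁li : Function.LeftInverse
      (fun w => mk3 (px w + (pt w) ^ 2 • py w) (py w) (pt w)) A₁ := by
    intro w
    simp only [hA₁]
    have : px (mk3 (px w - (pt w) ^ 2 • py w) (py w) (pt w)) = px w - (pt w) ^ 2 • py w := rfl
    rw [show px (mk3 (px w - (pt w) ^ 2 • py w) (py w) (pt w)) = px w - (pt w) ^ 2 • py w from rfl,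
      show py (mk3 (px w - (pt w) ^ 2 • py w) (py w) (pt w)) = py w from rfl,
      show pt (mk3 (px w - (pt w) ^ 2 • py w) (py w) (pt w)) = pt w from rfl,
      sub_add_cancel, mk3_proj]
  have hA₁ri : Function.RightInverse
      (fun w => mk3 (px w + (pt w) ^ 2 • py w) (py w) (pt w)) A₁ := by
    intro w
    simp only [hA₁]
    rw [show px (mk3 (px w + (pt w) ^ 2 • py w) (py w) (pt w)) = px w + (pt w) ^ 2 • py w from rfl,
      show py (mk3 (px w + (pt w) ^ 2 • py w) (py w) (pt w)) = py w from rfl,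
      show pt (mk3 (px w + (pt w) ^ 2 • py w) (py w) (pt w)) = pt w from rfl,
      add_sub_cancel_right, mk3_proj]
  have hA₂li : Function.LeftInverse
      (fun w => mk3 (px w) (py w - C (px w)) (pt w)) A₂ := by
    intro w
    simp only [hA₂]
    rw [show px (mk3 (px w) (py w + C (px w)) (pt w)) = px w from rfl,
      show py (mk3 (px w) (py w + C (px w)) (pt w)) = py w + C (px w) from rfl,
      show pt (mk3 (px w) (py w + C (px w)) (pt w)) = pt w from rfl,
      add_sub_cancel_right, mk3_proj]
  have hA₂ri : Function.RightInverse
      (fun w => mk3 (px w) (py w - C (px w)) (pt w)) A₂ := by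
    intro w
    simp only [hA₂]
    rw [show px (mk3 (px w) (py w - C (px w)) (pt w)) = px w from rfl,
      show py (mk3 (px w) (py w - C (px w)) (pt w)) = py w - C (px w) from rfl,
      show pt (mk3 (px w) (py w - C (px w)) (pt w)) = pt w from rfl,
      sub_add_cancel, mk3_proj]
  refine ⟨?_, ⟨⟨hA₁li.injective, hA₁ri.surjective⟩, hA₁li, hA₁ri, ?_⟩,
    ⟨⟨hA₂li.injective, hA₂ri.surjective⟩, hA₂li, hA₂ri, ?_⟩, ?_⟩
  · funext w
    simp only [Function.comp_apply, hA₂, hF', hA₁, hG]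
    rw [show px (mk3 (px w) (py w + C (px w)) (pt w)) = px w from rfl,
      show py (mk3 (px w) (py w + C (px w)) (pt w)) = py w + C (px w) from rfl,
      show pt (mk3 (px w) (py w + C (px w)) (pt w)) = pt w from rfl]
    set u := px w + pt w • Q (px w) + (pt w) ^ 2 • C (px w) with hu
    rw [show px (mk3 u (py w + C (px w)) (pt w)) = u from rfl,
      show py (mk3 u (py w + C (px w)) (pt w)) = py w + C (px w) from rfl,
      show pt (mk3 u (py w + C (px w)) (pt w)) = pt w from rfl]
    have : u - (pt w) ^ 2 • (py w + C (px w))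
        = px w - (pt w) ^ 2 • py w + pt w • Q (px w) := by
      funext i
      simp only [hu, Pi.add_apply, Pi.sub_apply, Pi.smul_apply, smul_eq_mul]
      ring
    rw [this]
  · exact ⟨fun i => Sum.rec
      (fun i => MvPolynomial.X (Sum.inl i) +
        (MvPolynomial.X (Sum.inr (Sum.inr 0))) ^ 2 * MvPolynomial.X (Sum.inr (Sum.inl i)))
      (Sum.rec (fun i => MvPolynomial.X (Sum.inr (Sum.inl i)))
        (fun _ => MvPolynomial.X (Sum.inr (Sum.inr 0)))) i,
      by intro w i; rcases i with i | i | j <;>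
        simp [mk3, px, py, pt, Sum.elim]⟩
  · exact ⟨fun i => Sum.rec
      (fun i => MvPolynomial.X (Sum.inl i))
      (Sum.rec (fun i => MvPolynomial.X (Sum.inr (Sum.inl i)) -
          MvPolynomial.rename (Sum.inl : Fin n → Fin n ⊕ Fin n ⊕ Fin 1) (c i))
        (fun _ => MvPolynomial.X (Sum.inr (Sum.inr 0)))) i,
      by intro w i; rcases i with i | i | j <;>
        simp [mk3, px, py, pt, Sum.elim, evc]⟩
  · refine ⟨fun i => Sum.rec
      (fun i => MvPolynomial.X (Sum.inr (Sum.inr 0)) *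
          MvPolynomial.rename (Sum.inl : Fin n → Fin n ⊕ Fin n ⊕ Fin 1) (q i)
        - (MvPolynomial.X (Sum.inr (Sum.inr 0))) ^ 2 * MvPolynomial.X (Sum.inr (Sum.inl i)))
      (Sum.rec (fun i => MvPolynomial.rename (Sum.inl : Fin n → Fin n ⊕ Fin n ⊕ Fin 1) (c i))
        (fun _ => 0)) i, ?_, ?_⟩
    · intro i
      rcases i with i | i | j
      · exact MvPolynomial.IsHomogeneous.sub
          ((MvPolynomial.isHomogeneous_X _ _).mul ((hq i).rename_isHomogeneous))
          (((MvPolynomial.isHomogeneous_X _ _).pow 2).mul (MvPolynomial.isHomogeneous_X _ _))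
      · exact (hc i).rename_isHomogeneous
      · exact MvPolynomial.isHomogeneous_zero _ _ _
    · intro w i
      rw [hG]
      rcases i with i | i | j
      · show (px w - (pt w) ^ 2 • py w + pt w • Q (px w)) i = _
        simp only [Pi.add_apply, Pi.sub_apply, Pi.smul_apply, smul_eq_mul, map_sub, map_mul,
          map_pow, MvPolynomial.eval_X, evq]
        show _ = w (Sum.inl i) + _
        simp only [px, py, pt]
        ring
      · show (py w + C (px w)) i = _
        simp [py, evc]
      · show pt w = _
        have : j = 0 := Subsingleton.elim j 0
        subst this
        simp [pt]
end
end

section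
/- Let H : ℝⁿ → ℝⁿ be a polynomial map all of whose components are homogeneous of degree 3, and let F = X + H be the corresponding Yagzhev map, where X is the identity. Then the Jacobian determinant j(F), as a polynomial in x₁,…,xₙ, is a nonzero constant (necessarily equal to 1) if and only if the Jacobian matrix J(H), regarded as an n×n matrix with entries in the polynomial ring ℝ[x₁,…,xₙ], is nilpotent. -/
/-!
Substituting `x ↦ t • x` sends `det (1 + J(H))` to `det (1 + t² J(H))`, since the entries of
`J(H)` are quadratic forms; this is the reversed characteristic polynomial of `-J(H)` evaluated
at `t²`. So if `j(F)` is a constant, that reversed characteristic polynomial is `1`, the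
characteristic polynomial of `J(H)` is `Xⁿ`, and Cayley–Hamilton makes `J(H)` nilpotent.
Conversely, over a reduced ring a nilpotent matrix has characteristic polynomial `Xⁿ`, and
evaluating it at `-1` gives `det (1 + N) = 1`.
-/

noncomputable section

namespace MvPolynomial

variable {σ R : Type*} [CommRing R]

/-- `p ↦ p (t • x)`, with `t` the variable of the outer polynomial ring. -/
def dilation : MvPolynomial σ R →ₐ[R] Polynomial (MvPolynomial σ R) :=
  aeval fun i => Polynomial.C (X i) * Polynomial.X

theorem dilation_monomial (s : σ →₀ ℕ) (c : R) :
    dilation (monomial s c) = Polynomial.C (monomial s c) * Polynomial.X ^ s.degree := by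
  simp only [dilation, monomial_eq, Finsupp.prod, map_mul, map_prod, map_pow, aeval_C, aeval_X,
    mul_pow, Finset.prod_mul_distrib, Finset.prod_pow_eq_pow_sum, Finsupp.degree_apply,
    Polynomial.algebraMap_apply, algebraMap_eq, mul_assoc]

theorem IsHomogeneous.dilation_eq {p : MvPolynomial σ R} {m : ℕ} (hp : p.IsHomogeneous m) :
    dilation p = Polynomial.C p * Polynomial.X ^ m := by
  conv_lhs => rw [p.as_sum]
  conv_rhs => rw [p.as_sum]
  rw [map_sum, map_sum, Finset.sum_mul]
  refine Finset.sum_congr rfl fun s hs => ?_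
  rw [dilation_monomial, Finsupp.degree_apply, ← hp.degree_eq_sum_deg_support hs]

end MvPolynomial

namespace Matrix

open Polynomial

variable {ι R : Type*} [Fintype ι] [DecidableEq ι] [CommRing R]

theorem charpoly_eq_X_pow_of_charpolyRev_eq_one {M : Matrix ι ι R} (h : M.charpolyRev = 1) :
    M.charpoly = X ^ Fintype.card ι := by
  nontriviality R
  rw [← reflect_reflect (N := Fintype.card ι) (p := M.charpoly), ← charpoly_natDegree_eq_dim M,
    ← reverse, reverse_charpoly, h, reflect_one]

theorem isNilpotent_of_charpolyRev_eq_one {M : Matrix ι ι R} (h : M.charpolyRev = 1) :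
    IsNilpotent M :=
  ⟨Fintype.card ι, by simpa [charpoly_eq_X_pow_of_charpolyRev_eq_one h] using aeval_self_charpoly M⟩

theorem det_one_add_of_isNilpotent [IsReduced R] {M : Matrix ι ι R} (hM : IsNilpotent M) :
    (1 + M).det = 1 := by
  have hchar : M.charpoly = X ^ Fintype.card ι := by
    ext i
    have h := Polynomial.isNilpotent_iff.mp (isNilpotent_charpoly_sub_pow_of_isNilpotent hM) i
    rwa [isNilpotent_iff_eq_zero, coeff_sub, sub_eq_zero] at h
  have h := eval_charpoly M (-1)
  rw [hchar, eval_pow, eval_X, map_neg, map_one, ← neg_add', det_neg] at h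
  exact ((isUnit_neg_one.pow _).mul_eq_left).mp h.symm

theorem charpolyRev_neg_eq_one_of_det_one_add_eq_C {σ : Type*}
    {M : Matrix ι ι (MvPolynomial σ R)} {d : ℕ} (hd : 0 < d)
    (hM : ∀ i j, (M i j).IsHomogeneous d) {c : R} (h : (1 + M).det = MvPolynomial.C c) :
    (-M).charpolyRev = 1 := by
  -- `(-M).charpolyRev = det (1 + t • M)`, and `expand d` substitutes `t ^ d` for `t`.
  have hexpand : expand _ d (-M).charpolyRev = C (MvPolynomial.C c) := by
    have hC := (MvPolynomial.isHomogeneous_C σ c).dilation_eq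
    rw [pow_zero, mul_one] at hC
    rw [← hC, ← h, charpolyRev, AlgHom.map_det, AlgHom.map_det]
    congr 1
    ext i j
    simp [one_apply, (hM i j).dilation_eq]
  have hconst := (expand_eq_C hd).mp hexpand
  have h0 := eval_charpolyRev (M := -M)
  rw [hconst, eval_C] at h0
  rw [hconst, h0, C_1]

theorem isNilpotent_of_det_one_add_eq_C {σ : Type*}
    {M : Matrix ι ι (MvPolynomial σ R)} {d : ℕ} (hd : 0 < d)
    (hM : ∀ i j, (M i j).IsHomogeneous d) {c : R} (h : (1 + M).det = MvPolynomial.C c) :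
    IsNilpotent M := by
  simpa using (isNilpotent_of_charpolyRev_eq_one
    (charpolyRev_neg_eq_one_of_det_one_add_eq_C hd hM h)).neg

end Matrix

/-- for a Yagzhev map F = X + H (components of H homogeneous of
degree 3) the formal Jacobian determinant j(F) = det(1 + J(H)) is a nonzero
constant iff the Jacobian matrix J(H) over ℝ[x₁,…,xₙ] is nilpotent; in that case
the constant is necessarily 1. -/
theorem stmt18 (n : ℕ) (H : Fin n → MvPolynomial (Fin n) ℝ)
    (hH : ∀ i, (H i).IsHomogeneous 3)
    (JH : Matrix (Fin n) (Fin n) (MvPolynomial (Fin n) ℝ))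
    (hJH : ∀ i j, JH i j = MvPolynomial.pderiv j (H i)) :
    ((∃ c : ℝ, c ≠ 0 ∧ (1 + JH).det = MvPolynomial.C c) ↔ IsNilpotent JH) ∧
    ((∃ c : ℝ, c ≠ 0 ∧ (1 + JH).det = MvPolynomial.C c) → (1 + JH).det = 1) := by
  have hquadratic : ∀ i j, (JH i j).IsHomogeneous 2 := fun i j => by
    rw [hJH]
    exact (hH i).pderiv
  have hnilpotent : (∃ c : ℝ, c ≠ 0 ∧ (1 + JH).det = MvPolynomial.C c) → IsNilpotent JH :=
    fun ⟨_, _, h⟩ => Matrix.isNilpotent_of_det_one_add_eq_C two_pos hquadratic h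
  refine ⟨⟨hnilpotent, fun hN => ⟨1, one_ne_zero, ?_⟩⟩,
    fun h => Matrix.det_one_add_of_isNilpotent (hnilpotent h)⟩
  rw [Matrix.det_one_add_of_isNilpotent hN, MvPolynomial.C_1]
end
end
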